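/- arXiv:2010.13817 — 2 statements merged into one kernel-verified Lean document; each statement's English description precedes it below -/
import Mathlib

section
/- Let d ≥ 1 and let {(p_i, φ_i)}_{i∈I} be a finite ensemble of unit vectors φ_i in ℂ^d with weights p_i ≥ 0, ∑_i p_i = 1, forming a complex projective 2-design, i.e., ∑_i p_i (|φ_i⟩⟨φ_i|)^{⊗2} = (2/(d(d+1))) Π_sym, where Π_sym is the orthogonal projector onto the symmetric subspace of ℂ^d ⊗ ℂ^d. If A is a Hermitian d×d matrix with |⟨φ_i|A|φ_i⟩| ≤ 1 for every i ∈ I, then (Tr A)² + Tr(A²) ≤ d(d+1); in particular the operator norm satisfies ‖A‖ ≤ √(d(d+1)). -/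
/-!
Multiply the design identity by `A ⊗ A` and take traces. Since `Tr (|φ⟩⟨φ|)^{⊗2} (A ⊗ A) = ⟨φ|A|φ⟩²`
and `Tr S (A ⊗ A) = Tr A²`, this gives `∑ p_i ⟨φ_i|A|φ_i⟩² = ((Tr A)² + Tr A²) / (d(d+1))`, and
the left side has modulus at most `∑ p_i = 1`. For Hermitian `A`, `Tr A²` is the squared Frobenius
norm, which dominates the squared operator norm.
-/

namespace Design

/-- `(|φ⟩⟨φ|)^{⊗2}` as a matrix on `ℂ^d ⊗ ℂ^d`. -/
noncomputable def projSq {d : ℕ} (φ : Fin d → ℂ) :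
    Matrix (Fin d × Fin d) (Fin d × Fin d) ℂ :=
  Matrix.of fun x y =>
    φ x.1 * φ x.2 * (starRingEnd ℂ) (φ y.1) * (starRingEnd ℂ) (φ y.2)

/-- The swap operator `S` on `ℂ^d ⊗ ℂ^d`. -/
noncomputable def swapOp (d : ℕ) : Matrix (Fin d × Fin d) (Fin d × Fin d) ℂ :=
  Matrix.of fun x y => if x.1 = y.2 ∧ x.2 = y.1 then 1 else 0

/-- The projector onto the symmetric subspace: `Π_sym = (𝟙 + S)/2`. -/
noncomputable def projSym (d : ℕ) : Matrix (Fin d × Fin d) (Fin d × Fin d) ℂ :=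
  (2 : ℂ)⁻¹ • (1 + swapOp d)

open Matrix
open scoped Kronecker

def IsTwoDesign {ι : Type*} [Fintype ι] (d : ℕ) (p : ι → ℝ) (φ : ι → Fin d → ℂ) : Prop :=
  ∑ i, p i • projSq (φ i) = ((2 : ℝ) / (d * (d + 1))) • projSym d

section Trace

variable {d : ℕ}

theorem trace_projSq_mul_kronecker (φ : Fin d → ℂ) (A B : Matrix (Fin d) (Fin d) ℂ) :
    (projSq φ * (A ⊗ₖ B)).trace = (star φ ⬝ᵥ A *ᵥ φ) * (star φ ⬝ᵥ B *ᵥ φ) := by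
  simp only [trace, diag, mul_apply]
  rw [Finset.sum_comm, dotProduct, dotProduct, Finset.sum_mul_sum, Fintype.sum_prod_type]
  simp only [Fintype.sum_prod_type, projSq, of_apply, kroneckerMap_apply, mulVec, dotProduct,
    Finset.mul_sum, Finset.sum_mul, Pi.star_apply]
  refine Finset.sum_congr rfl fun _ _ => Finset.sum_congr rfl fun _ _ => ?_
  rw [Finset.sum_comm]
  exact Finset.sum_congr rfl fun _ _ => Finset.sum_congr rfl fun _ _ => by
    simp only [RCLike.star_def]; ring

theorem trace_swapOp_mul_kronecker (A B : Matrix (Fin d) (Fin d) ℂ) :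
    (swapOp d * (A ⊗ₖ B)).trace = (A * B).trace := by
  simp only [trace, diag, mul_apply, Fintype.sum_prod_type, swapOp, of_apply, kroneckerMap_apply,
    ite_mul, one_mul, zero_mul, ite_and, Finset.sum_ite_eq, Finset.mem_univ, if_true]
  exact Finset.sum_comm

theorem trace_projSym_mul_kronecker (A B : Matrix (Fin d) (Fin d) ℂ) :
    (projSym d * (A ⊗ₖ B)).trace = (A.trace * B.trace + (A * B).trace) / 2 := by
  rw [projSym, smul_mul, trace_smul, add_mul, trace_add, one_mul, trace_kronecker,
    trace_swapOp_mul_kronecker, smul_eq_mul]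
  ring

end Trace

theorem IsTwoDesign.sum_mul_quadForm_mul_quadForm {d : ℕ} {ι : Type*} [Fintype ι] {p : ι → ℝ}
    {φ : ι → Fin d → ℂ} (h : IsTwoDesign d p φ) (A B : Matrix (Fin d) (Fin d) ℂ) :
    ∑ i, (p i : ℂ) * ((star (φ i) ⬝ᵥ A *ᵥ φ i) * (star (φ i) ⬝ᵥ B *ᵥ φ i)) =
      (A.trace * B.trace + (A * B).trace) / (d * (d + 1)) := by
  have h_trace := congrArg (fun M => (M * (A ⊗ₖ B)).trace) h
  simp only [Finset.sum_mul, trace_sum, smul_mul, trace_smul, trace_projSq_mul_kronecker,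
    trace_projSym_mul_kronecker, Complex.real_smul] at h_trace
  rw [h_trace]
  push_cast
  ring

theorem norm_sum_mul_sq_le_sum {ι : Type*} [Fintype ι] {p : ι → ℝ} {t : ι → ℂ}
    (hp : ∀ i, 0 ≤ p i) (ht : ∀ i, ‖t i‖ ≤ 1) : ‖∑ i, (p i : ℂ) * t i ^ 2‖ ≤ ∑ i, p i := by
  refine (norm_sum_le _ _).trans (Finset.sum_le_sum fun i _ => ?_)
  rw [norm_mul, norm_pow, Complex.norm_of_nonneg (hp i)]
  exact mul_le_of_le_one_right (hp i) (pow_le_one₀ (norm_nonneg _) (ht i))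

theorem IsTwoDesign.norm_trace_sq_add_trace_mul_self_le {d : ℕ} (hd : 0 < d) {ι : Type*}
    [Fintype ι] {p : ι → ℝ} {φ : ι → Fin d → ℂ} (h : IsTwoDesign d p φ) (hp : ∀ i, 0 ≤ p i)
    (hp1 : ∑ i, p i = 1) {A : Matrix (Fin d) (Fin d) ℂ}
    (hA : ∀ i, ‖star (φ i) ⬝ᵥ A *ᵥ φ i‖ ≤ 1) :
    ‖A.trace ^ 2 + (A * A).trace‖ ≤ d * (d + 1) := by
  have hd₀ : (d : ℂ) ≠ 0 := by exact_mod_cast hd.ne'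
  have hd₁ : (d : ℂ) + 1 ≠ 0 := by exact_mod_cast d.succ_ne_zero
  have h_eq : A.trace ^ 2 + (A * A).trace =
      (d * (d + 1) : ℂ) * ∑ i, (p i : ℂ) * (star (φ i) ⬝ᵥ A *ᵥ φ i) ^ 2 := by
    simp only [sq, h.sum_mul_quadForm_mul_quadForm A A]
    field_simp
  have h_norm : ‖(d * (d + 1) : ℂ)‖ = d * (d + 1) := by norm_cast
  rw [h_eq, norm_mul, h_norm]
  exact mul_le_of_le_one_right (by positivity) (hp1 ▸ norm_sum_mul_sq_le_sum hp hA)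

section Hermitian

variable {n : Type*} [Fintype n] {A : Matrix n n ℂ}

theorem _root_.Matrix.IsHermitian.re_trace_sq (hA : A.IsHermitian) :
    (A.trace ^ 2).re = A.trace.re ^ 2 := by
  have him : A.trace.im = 0 :=
    Complex.conj_eq_iff_im.mp (by rw [← RCLike.star_def, ← trace_conjTranspose, hA.eq])
  simp [sq, him]

theorem _root_.Matrix.IsHermitian.trace_mul_self (hA : A.IsHermitian) :
    (A * A).trace = ((∑ j, ∑ k, Complex.normSq (A j k) : ℝ) : ℂ) := by
  push_cast
  simp only [trace, diag, mul_apply]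
  refine Finset.sum_congr rfl fun j _ => Finset.sum_congr rfl fun k _ => ?_
  rw [← hA.apply k j, RCLike.star_def, Complex.mul_conj]

end Hermitian

section Frobenius

attribute [local instance] Matrix.frobeniusSeminormedAddCommGroup

theorem sqrt_sum_normSq_mulVec_le {m n : Type*} [Fintype m] [Fintype n] (M : Matrix m n ℂ)
    (x : n → ℂ) : √(∑ j, Complex.normSq ((M *ᵥ x) j)) ≤
      √(∑ j, ∑ k, Complex.normSq (M j k)) * √(∑ k, Complex.normSq (x k)) := by
  simpa [← replicateCol_mulVec (ι := Unit), frobenius_norm_def, Real.sqrt_eq_rpow,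
    Complex.normSq_eq_norm_sq, PiLp.norm_eq_of_L2] using frobenius_norm_mul M (replicateCol Unit x)

end Frobenius

theorem two_design_dual_bound_general (d : ℕ) (hd : 1 ≤ d) {ι : Type*} [Fintype ι]
    (p : ι → ℝ) (φ : ι → Fin d → ℂ)
    (hp : ∀ i, 0 ≤ p i) (hp1 : ∑ i, p i = 1)
    (hdesign : ∑ i, p i • projSq (φ i)
      = ((2 : ℝ) / (d * (d + 1))) • projSym d)
    (A : Matrix (Fin d) (Fin d) ℂ) (hA : A.IsHermitian)
    (hfeas : ∀ i, ‖∑ j, (starRingEnd ℂ) (φ i j) * (A.mulVec (φ i)) j‖ ≤ 1) :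
    ((A.trace).re) ^ 2 + ((A * A).trace).re ≤ (d : ℝ) * (d + 1) ∧
    ∀ x : Fin d → ℂ,
      Real.sqrt (∑ j, Complex.normSq ((A.mulVec x) j))
        ≤ Real.sqrt ((d : ℝ) * (d + 1)) * Real.sqrt (∑ j, Complex.normSq (x j)) := by
  have h_bound : A.trace.re ^ 2 + ∑ j, ∑ k, Complex.normSq (A j k) ≤ d * (d + 1) := by
    have h_re : (A.trace ^ 2 + (A * A).trace).re =
        A.trace.re ^ 2 + ∑ j, ∑ k, Complex.normSq (A j k) := by
      rw [Complex.add_re, hA.re_trace_sq, hA.trace_mul_self, Complex.ofReal_re]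
    exact h_re ▸ (Complex.re_le_norm _).trans
      (IsTwoDesign.norm_trace_sq_add_trace_mul_self_le hd hdesign hp hp1 hfeas)
  refine ⟨by rwa [hA.trace_mul_self, Complex.ofReal_re], fun x => ?_⟩
  refine (sqrt_sum_normSq_mulVec_le A x).trans ?_
  gcongr
  linarith [sq_nonneg A.trace.re]

/-- If `{(p_i, φ_i)}` is a complex projective 2-design of unit
vectors in `ℂ^d` and `A` is Hermitian with `|⟨φ_i|A|φ_i⟩| ≤ 1` for all `i`, then
`(Tr A)² + Tr(A²) ≤ d(d+1)`; in particular `‖Ax‖ ≤ √(d(d+1))·‖x‖` for all `x`,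
i.e. the operator norm of `A` is at most `√(d(d+1))`. -/
theorem two_design_dual_bound (d : ℕ) (hd : 1 ≤ d) {ι : Type*} [Fintype ι]
    (p : ι → ℝ) (φ : ι → Fin d → ℂ)
    (hp : ∀ i, 0 ≤ p i) (hp1 : ∑ i, p i = 1)
    (hunit : ∀ i, ∑ j, Complex.normSq (φ i j) = 1)
    (hdesign : ∑ i, p i • projSq (φ i)
      = ((2 : ℝ) / (d * (d + 1))) • projSym d)
    (A : Matrix (Fin d) (Fin d) ℂ) (hA : A.IsHermitian)
    (hfeas : ∀ i, ‖∑ j, (starRingEnd ℂ) (φ i j) * (A.mulVec (φ i)) j‖ ≤ 1) :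
    ((A.trace).re) ^ 2 + ((A * A).trace).re ≤ (d : ℝ) * (d + 1) ∧
    ∀ x : Fin d → ℂ,
      Real.sqrt (∑ j, Complex.normSq ((A.mulVec x) j))
        ≤ Real.sqrt ((d : ℝ) * (d + 1)) * Real.sqrt (∑ j, Complex.normSq (x j)) :=
  two_design_dual_bound_general d hd p φ hp hp1 hdesign A hA hfeas

end Design
end

section
/- Let |G⟩ be the unit vector in ℂ² whose rank-one projector is ½(I + (X+Y+Z)/√3), where X, Y, Z are the Pauli matrices. Then the maximum of |⟨φ|G⟩|² over the six single-qubit pure stabilizer states φ (the normalized eigenvectors of X, Y, and Z) equals (3+√3)/6, and consequently 𝔇_min(G) = log₂(3 − √3). -/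
/-!
For a unit vector `φ`, `|⟨φ|G⟩|² = ⟨φ|ρ|φ⟩` with `ρ = |G⟩⟨G| = ½(I + (X+Y+Z)/√3)`. If `φ` is an
eigenvector of one Pauli matrix `P`, its eigenvalue is `±1`, and `⟨φ|Q|φ⟩ = 0` for the two other
Pauli matrices `Q` because they anticommute with `P`. So `⟨φ|X+Y+Z|φ⟩ = ±1` and every overlap is
`(3 ± √3)/6`, the larger value being attained at `|0⟩`. Finally `((3+√3)/6)⁻¹ = 3 - √3`.
-/

namespace Magic1

/-- The Pauli `X` matrix on a single qubit. -/
noncomputable def Xm : Matrix (ZMod 2) (ZMod 2) ℂ :=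
  Matrix.of fun i j => if i = j then 0 else 1

/-- The Pauli `Y` matrix on a single qubit. -/
noncomputable def Ym : Matrix (ZMod 2) (ZMod 2) ℂ :=
  Matrix.of fun i j =>
    if i = 0 ∧ j = 1 then -Complex.I else if i = 1 ∧ j = 0 then Complex.I else 0

/-- The Pauli `Z` matrix on a single qubit. -/
noncomputable def Zm : Matrix (ZMod 2) (ZMod 2) ℂ :=
  Matrix.of fun i j => if i = j then (if i = 0 then 1 else -1) else 0

/-- The six single-qubit pure stabilizer states: the normalized eigenvectors of
the Pauli matrices `X`, `Y`, `Z`. -/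
def IsStabState1 (φ : ZMod 2 → ℂ) : Prop :=
  (∑ x, Complex.normSq (φ x)) = 1 ∧
  ∃ c : ℂ, Xm.mulVec φ = c • φ ∨ Ym.mulVec φ = c • φ ∨ Zm.mulVec φ = c • φ


open Matrix

lemma sum_zmod2 {M : Type*} [AddCommMonoid M] (f : ZMod 2 → M) : ∑ x, f x = f 0 + f 1 :=
  Fin.sum_univ_two f

lemma forall_zmod2 {p : ZMod 2 → Prop} : (∀ i, p i) ↔ p 0 ∧ p 1 :=
  Fin.forall_fin_two

section Anticommute

variable {n : Type*} [Fintype n] {A B C : Matrix n n ℂ} {v : n → ℂ} {c : ℂ}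

lemma star_dotProduct_self_eq_one (hv : ∑ i, Complex.normSq (v i) = 1) : star v ⬝ᵥ v = 1 := by
  simp only [dotProduct, Pi.star_apply, Complex.star_def, ← Complex.normSq_eq_conj_mul_self]
  exact_mod_cast hv

lemma ne_zero_of_star_dotProduct_self_eq_one (hv : star v ⬝ᵥ v = 1) : v ≠ 0 := by
  rintro rfl
  simp at hv

lemma star_dotProduct_mulVec_of_mulVec_eq_smul (hv : A *ᵥ v = c • v) (hv1 : star v ⬝ᵥ v = 1) :
    star v ⬝ᵥ A *ᵥ v = c := by
  rw [hv, dotProduct_smul, hv1, smul_eq_mul, mul_one]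

lemma eq_one_or_eq_neg_one_of_mulVec_eq_smul [DecidableEq n] (hAA : A * A = 1)
    (hv : A *ᵥ v = c • v) (hv0 : v ≠ 0) : c = 1 ∨ c = -1 := by
  have hcc : (c * c) • v = v := by
    rw [← smul_smul, ← hv, ← mulVec_smul, ← hv, mulVec_mulVec, hAA, one_mulVec]
  have hsq : (c - 1) * (c + 1) = 0 := by
    have : (c * c - 1) • v = 0 := by rw [sub_smul, one_smul, hcc, sub_self]
    linear_combination (smul_eq_zero.mp this).resolve_right hv0
  rcases mul_eq_zero.mp hsq with h | h
  · exact Or.inl (sub_eq_zero.mp h)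
  · exact Or.inr (eq_neg_of_add_eq_zero_left h)

lemma star_vecMul_of_isHermitian (hA : A.IsHermitian) (hv : A *ᵥ v = c • v) :
    star v ᵥ* A = star c • star v := by
  rw [← hA.eq, ← star_mulVec, hv, star_smul]

/-- Sandwiching `A * B = -(B * A)` between `v` gives `(c̄ + c) ⟨v|B|v⟩ = 0`, and `c = ±1`. -/
lemma star_dotProduct_mulVec_eq_zero_of_anticommute [DecidableEq n] (hA : A.IsHermitian)
    (hAA : A * A = 1) (hAB : A * B = -(B * A)) (hv : A *ᵥ v = c • v) (hv0 : v ≠ 0) :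
    star v ⬝ᵥ B *ᵥ v = 0 := by
  have hAB_v : star v ⬝ᵥ (A * B) *ᵥ v = star c * (star v ⬝ᵥ B *ᵥ v) := by
    rw [← mulVec_mulVec, dotProduct_mulVec, star_vecMul_of_isHermitian hA hv, smul_dotProduct,
      smul_eq_mul]
  have hBA_v : star v ⬝ᵥ (B * A) *ᵥ v = c * (star v ⬝ᵥ B *ᵥ v) := by
    rw [← mulVec_mulVec, hv, mulVec_smul, dotProduct_smul, smul_eq_mul]
  have hsum : (star c + c) * (star v ⬝ᵥ B *ᵥ v) = 0 := by
    rw [add_mul, ← hAB_v, ← hBA_v, hAB, neg_mulVec, dotProduct_neg, neg_add_cancel]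
  refine (mul_eq_zero.mp hsum).resolve_left ?_
  rcases eq_one_or_eq_neg_one_of_mulVec_eq_smul hAA hv hv0 with rfl | rfl <;> norm_num

lemma star_dotProduct_add_add_mulVec_of_anticommute [DecidableEq n] (hA : A.IsHermitian)
    (hAA : A * A = 1) (hAB : A * B = -(B * A)) (hAC : A * C = -(C * A))
    (hv : A *ᵥ v = c • v) (hv1 : star v ⬝ᵥ v = 1) :
    star v ⬝ᵥ (A + B + C) *ᵥ v = c := by
  have hv0 := ne_zero_of_star_dotProduct_self_eq_one hv1
  rw [add_mulVec, add_mulVec, dotProduct_add, dotProduct_add,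
    star_dotProduct_mulVec_of_mulVec_eq_smul hv hv1,
    star_dotProduct_mulVec_eq_zero_of_anticommute hA hAA hAB hv hv0,
    star_dotProduct_mulVec_eq_zero_of_anticommute hA hAA hAC hv hv0, add_zero, add_zero]

end Anticommute

lemma normSq_star_dotProduct {n : Type*} [Fintype n] (φ G : n → ℂ) :
    ((‖star φ ⬝ᵥ G‖ ^ 2 : ℝ) : ℂ) = star φ ⬝ᵥ vecMulVec G (star G) *ᵥ φ := by
  rw [vecMulVec_mulVec, Complex.ofReal_pow, ← Complex.mul_conj', star_dotProduct G φ]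
  simp [dotProduct_smul, mul_comm]

lemma Xm_isHermitian : Xm.IsHermitian := by
  ext i j; revert i j; simp [forall_zmod2, Xm]

lemma Ym_isHermitian : Ym.IsHermitian := by
  ext i j; revert i j; simp [forall_zmod2, Ym]

lemma Zm_isHermitian : Zm.IsHermitian := by
  ext i j; revert i j; simp [forall_zmod2, Zm]

lemma Xm_mul_self : Xm * Xm = 1 := by
  ext i j; revert i j; simp [forall_zmod2, Xm, mul_apply, sum_zmod2, one_apply]

lemma Ym_mul_self : Ym * Ym = 1 := by
  ext i j; revert i j; simp [forall_zmod2, Ym, mul_apply, sum_zmod2, one_apply]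

lemma Zm_mul_self : Zm * Zm = 1 := by
  ext i j; revert i j; simp [forall_zmod2, Zm, mul_apply, one_apply]

lemma Xm_mul_Ym : Xm * Ym = -(Ym * Xm) := by
  ext i j; revert i j; simp [forall_zmod2, Xm, Ym, mul_apply, sum_zmod2]

lemma Ym_mul_Zm : Ym * Zm = -(Zm * Ym) := by
  ext i j; revert i j; simp [forall_zmod2, Ym, Zm, mul_apply, sum_zmod2]

lemma Zm_mul_Xm : Zm * Xm = -(Xm * Zm) := by
  ext i j; revert i j; simp [forall_zmod2, Zm, Xm, mul_apply, sum_zmod2]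

lemma Zm_mulVec_single_zero : Zm *ᵥ Pi.single 0 1 = (1 : ℂ) • Pi.single 0 1 := by
  ext i; revert i; simp [forall_zmod2, Zm, mulVec, dotProduct]

lemma star_dotProduct_pauliSum_mulVec {φ : ZMod 2 → ℂ} {c : ℂ} (hφ : star φ ⬝ᵥ φ = 1)
    (hc : Xm *ᵥ φ = c • φ ∨ Ym *ᵥ φ = c • φ ∨ Zm *ᵥ φ = c • φ) :
    star φ ⬝ᵥ (Xm + Ym + Zm) *ᵥ φ = c ∧ (c = 1 ∨ c = -1) := by
  have hφ0 := ne_zero_of_star_dotProduct_self_eq_one hφ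
  rcases hc with hX | hY | hZ
  · exact ⟨star_dotProduct_add_add_mulVec_of_anticommute Xm_isHermitian Xm_mul_self Xm_mul_Ym
      (neg_eq_iff_eq_neg.mp Zm_mul_Xm.symm) hX hφ,
      eq_one_or_eq_neg_one_of_mulVec_eq_smul Xm_mul_self hX hφ0⟩
  · rw [add_comm Xm]
    exact ⟨star_dotProduct_add_add_mulVec_of_anticommute Ym_isHermitian Ym_mul_self
      (neg_eq_iff_eq_neg.mp Xm_mul_Ym.symm) Ym_mul_Zm hY hφ,
      eq_one_or_eq_neg_one_of_mulVec_eq_smul Ym_mul_self hY hφ0⟩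
  · rw [← add_rotate]
    exact ⟨star_dotProduct_add_add_mulVec_of_anticommute Zm_isHermitian Zm_mul_self Zm_mul_Xm
      (neg_eq_iff_eq_neg.mp Ym_mul_Zm.symm) hZ hφ,
      eq_one_or_eq_neg_one_of_mulVec_eq_smul Zm_mul_self hZ hφ0⟩

lemma ofReal_sqrt_three_sq : ((√3 : ℝ) : ℂ) ^ 2 = 3 := by
  norm_cast
  exact Real.sq_sqrt (by norm_num)

section GoldenState

variable {G φ : ZMod 2 → ℂ}

lemma norm_sq_overlap_eq_pauliSum (hproj : vecMulVec G (star G) =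
      (2 : ℂ)⁻¹ • ((1 : Matrix (ZMod 2) (ZMod 2) ℂ) + ((√3 : ℝ) : ℂ)⁻¹ • (Xm + Ym + Zm)))
    (hφ : star φ ⬝ᵥ φ = 1) :
    ((‖star φ ⬝ᵥ G‖ ^ 2 : ℝ) : ℂ) =
      2⁻¹ * (1 + ((√3 : ℝ) : ℂ)⁻¹ * (star φ ⬝ᵥ (Xm + Ym + Zm) *ᵥ φ)) := by
  rw [normSq_star_dotProduct, hproj, smul_mulVec, add_mulVec, smul_mulVec, one_mulVec,
    dotProduct_smul, dotProduct_add, dotProduct_smul, hφ, smul_eq_mul, smul_eq_mul]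

lemma norm_sq_overlap_eq (hproj : vecMulVec G (star G) =
      (2 : ℂ)⁻¹ • ((1 : Matrix (ZMod 2) (ZMod 2) ℂ) + ((√3 : ℝ) : ℂ)⁻¹ • (Xm + Ym + Zm)))
    {c : ℂ} (hφ : ∑ x, Complex.normSq (φ x) = 1)
    (hc : Xm *ᵥ φ = c • φ ∨ Ym *ᵥ φ = c • φ ∨ Zm *ᵥ φ = c • φ) :
    (c = 1 ∧ ‖star φ ⬝ᵥ G‖ ^ 2 = (3 + √3) / 6) ∨ (c = -1 ∧ ‖star φ ⬝ᵥ G‖ ^ 2 = (3 - √3) / 6) := by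
  have hφ1 := star_dotProduct_self_eq_one hφ
  obtain ⟨hexp, hc1⟩ := star_dotProduct_pauliSum_mulVec hφ1 hc
  have hov := norm_sq_overlap_eq_pauliSum hproj hφ1
  rw [hexp] at hov
  rcases hc1 with rfl | rfl
  · refine Or.inl ⟨rfl, ?_⟩
    rw [← Complex.ofReal_inj, hov]
    push_cast
    field_simp
    linear_combination (-2 : ℂ) * ofReal_sqrt_three_sq
  · refine Or.inr ⟨rfl, ?_⟩
    rw [← Complex.ofReal_inj, hov]
    push_cast
    field_simp
    linear_combination (2 : ℂ) * ofReal_sqrt_three_sq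

lemma isGreatest_norm_sq_overlap (hproj : vecMulVec G (star G) =
      (2 : ℂ)⁻¹ • ((1 : Matrix (ZMod 2) (ZMod 2) ℂ) + ((√3 : ℝ) : ℂ)⁻¹ • (Xm + Ym + Zm))) :
    IsGreatest {t : ℝ | ∃ φ : ZMod 2 → ℂ, IsStabState1 φ ∧ t = ‖star φ ⬝ᵥ G‖ ^ 2}
      ((3 + √3) / 6) := by
  constructor
  · have hnorm : ∑ x, Complex.normSq ((Pi.single 0 1 : ZMod 2 → ℂ) x) = 1 := by
      simp [sum_zmod2]
    have hZ : Xm *ᵥ Pi.single 0 1 = (1 : ℂ) • Pi.single 0 1 ∨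
        Ym *ᵥ Pi.single 0 1 = (1 : ℂ) • Pi.single 0 1 ∨
        Zm *ᵥ Pi.single 0 1 = (1 : ℂ) • Pi.single 0 1 :=
      Or.inr (Or.inr Zm_mulVec_single_zero)
    refine ⟨Pi.single 0 1, ⟨hnorm, 1, hZ⟩, ?_⟩
    rcases norm_sq_overlap_eq hproj hnorm hZ with ⟨-, h⟩ | ⟨h, -⟩
    · exact h.symm
    · norm_num at h
  · rintro t ⟨φ, ⟨hnorm, c, hc⟩, rfl⟩
    rcases norm_sq_overlap_eq hproj hnorm hc with ⟨-, h⟩ | ⟨-, h⟩ <;> rw [h]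
    linarith [Real.sqrt_nonneg 3]

end GoldenState

theorem golden_state_Dmin_general (G : ZMod 2 → ℂ)
    (hproj : Matrix.vecMulVec G (star G) =
      (2 : ℂ)⁻¹ • ((1 : Matrix (ZMod 2) (ZMod 2) ℂ) +
        (Complex.ofReal (Real.sqrt 3))⁻¹ • (Xm + Ym + Zm))) :
    sSup { t : ℝ | ∃ φ : ZMod 2 → ℂ, IsStabState1 φ ∧
        t = ‖∑ x, (starRingEnd ℂ) (φ x) * G x‖ ^ 2 }
      = (3 + Real.sqrt 3) / 6 ∧
    - Real.logb 2 (sSup { t : ℝ | ∃ φ : ZMod 2 → ℂ, IsStabState1 φ ∧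
        t = ‖∑ x, (starRingEnd ℂ) (φ x) * G x‖ ^ 2 })
      = Real.logb 2 (3 - Real.sqrt 3) := by
  have hsup : sSup { t : ℝ | ∃ φ : ZMod 2 → ℂ, IsStabState1 φ ∧
      t = ‖∑ x, (starRingEnd ℂ) (φ x) * G x‖ ^ 2 } = (3 + √3) / 6 :=
    (isGreatest_norm_sq_overlap hproj).csSup_eq
  refine ⟨hsup, ?_⟩
  rw [hsup, ← Real.logb_inv, inv_eq_of_mul_eq_one_right]
  linear_combination (-1 / 6 : ℝ) * Real.sq_sqrt (show (0 : ℝ) ≤ 3 by norm_num)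

/-- If `|G⟩` is the unit vector in `ℂ²` whose rank-one
projector is `½(I + (X+Y+Z)/√3)`, then the maximal squared overlap of `G` with
the six single-qubit pure stabilizer states equals `(3+√3)/6`, hence
`𝔇_min(G) = −log₂((3+√3)/6) = log₂(3−√3)`. -/
theorem golden_state_Dmin (G : ZMod 2 → ℂ)
    (hunit : (∑ x, Complex.normSq (G x)) = 1)
    (hproj : Matrix.vecMulVec G (star G) =
      (2 : ℂ)⁻¹ • ((1 : Matrix (ZMod 2) (ZMod 2) ℂ) +
        (Complex.ofReal (Real.sqrt 3))⁻¹ • (Xm + Ym + Zm))) :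
    sSup { t : ℝ | ∃ φ : ZMod 2 → ℂ, IsStabState1 φ ∧
        t = ‖∑ x, (starRingEnd ℂ) (φ x) * G x‖ ^ 2 }
      = (3 + Real.sqrt 3) / 6 ∧
    - Real.logb 2 (sSup { t : ℝ | ∃ φ : ZMod 2 → ℂ, IsStabState1 φ ∧
        t = ‖∑ x, (starRingEnd ℂ) (φ x) * G x‖ ^ 2 })
      = Real.logb 2 (3 - Real.sqrt 3) :=
  golden_state_Dmin_general G hproj

end Magic1
end
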